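/- Let τ be a restricted involution of the Grassmannian geometry X with fixed point set Y. For any a ∈ X, τ induces an automorphism of the torsor U_{a,τ(a)} (with product (xyz) = Γ(x,a,y,τ(a),z)), and therefore the fixed-point set G(τ;a) = U_{a,τ(a)} ∩ Y is a subtorsor. Moreover, as a set, G(τ;a) = U_a ∩ Y, where U_a is the set of complements of a. -/

import Mathlib

/-!
Modulo `a`, the map `M = P^a_x - P^z_b` agrees on `y` with the projection `P^b_z = 1 - P^z_b`
onto `z` along `b`, because `P^a_x - 1` takes values in `a`. Hence `W → W/a` restricted to
`Γ(x,a,y,b,z) = M y` is the composite of the isomorphisms `y ≅ W/b ≅ z ≅ W/a`, so the product of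
common complements of `a` and `b` is again a complement of `a`. With `b = τ a`, the equivariance
of `τ` and `τ (τ a) = a` make `τ` an automorphism of `U_{a,τ a}`; a `τ`-fixed complement of `a`
is a complement of `τ a` as well, since `τ` preserves transversality.
-/

open Classical in
/-- The projection `P^a_x` with image `x` and kernel `a` (zero if not complementary). -/
noncomputable def projEnd {R W : Type*} [Ring R] [AddCommGroup W] [Module R W]
    (x a : Submodule R W) : Module.End R W :=
  if h : IsCompl x a then x.subtype ∘ₗ x.linearProjOfIsCompl a h else 0

/-- The restricted multiplication map `Γ(x,a,y,b,z) = M_{xabz}(y)`,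
`M_{xabz} = P^a_x - P^z_b`. -/
noncomputable def Gammap {R W : Type*} [Ring R] [AddCommGroup W] [Module R W]
    (x a y b z : Submodule R W) : Submodule R W :=
  Submodule.map (projEnd x a - projEnd b z) y

namespace Submodule

variable {R V W : Type*} [Ring R] [AddCommGroup V] [Module R V] [AddCommGroup W] [Module R W]

theorem isCompl_map_of_bijective_mkQ_comp {f : V →ₗ[R] W} {y : Submodule R V}
    {a : Submodule R W} (h : Function.Bijective (a.mkQ ∘ₗ f ∘ₗ y.subtype)) :
    IsCompl (y.map f) a := by
  constructor
  · rw [disjoint_def]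
    rintro _ ⟨u, hu, rfl⟩ hua
    have hu0 : (⟨u, hu⟩ : y) = 0 := h.1 (by simpa [Quotient.mk_eq_zero] using hua)
    rw [show u = 0 from congrArg Subtype.val hu0, map_zero]
  · rw [codisjoint_iff_exists_add_eq]
    intro w
    obtain ⟨⟨u, hu⟩, hw⟩ := h.2 (a.mkQ w)
    refine ⟨f u, w - f u, mem_map_of_mem hu, ?_, add_sub_cancel _ _⟩
    exact (Quotient.eq a).mp (by simpa using hw.symm)

theorem bijective_projectionOnto_comp_subtype {b y z : Submodule R W}
    (hyb : IsCompl y b) (hzb : IsCompl z b) :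
    Function.Bijective (z.projectionOnto b hzb ∘ₗ y.subtype) := by
  have : z.projectionOnto b hzb ∘ₗ y.subtype =
      ((b.quotientEquivOfIsCompl y hyb.symm).symm.trans
        (b.quotientEquivOfIsCompl z hzb.symm) : y →ₗ[R] z) := by
    ext u
    simp
  rw [this]
  exact LinearEquiv.bijective _

end Submodule

section Grassmannian

open Submodule

variable {R W : Type*} [Ring R] [AddCommGroup W] [Module R W]

theorem projEnd_of_isCompl {x a : Submodule R W} (h : IsCompl x a) :
    projEnd x a = x.projection a h := by
  rw [projEnd, dif_pos h]
  rfl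

theorem isCompl_gammap {x a y b z : Submodule R W} (hxa : IsCompl x a)
    (hyb : IsCompl y b) (hza : IsCompl z a) (hzb : IsCompl z b) :
    IsCompl (Gammap x a y b z) a := by
  rw [Gammap, projEnd_of_isCompl hxa, projEnd_of_isCompl hzb.symm]
  apply isCompl_map_of_bijective_mkQ_comp
  have hmod : a.mkQ ∘ₗ (x.projection a hxa - b.projection z hzb.symm) ∘ₗ y.subtype =
      (a.mkQ ∘ₗ z.subtype) ∘ₗ (z.projectionOnto b hzb ∘ₗ y.subtype) := by
    ext u
    have hu : u - x.projection a hxa u ∈ a := sub_projection_mem hxa u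
    simp only [LinearMap.comp_apply, mkQ_apply, coe_subtype, coe_projectionOnto_apply,
      LinearMap.sub_apply, Submodule.Quotient.eq]
    rw [projection_eq_self_sub_projection hzb.symm, sub_sub_sub_cancel_right,
      ← neg_sub]
    exact a.neg_mem hu
  rw [hmod]
  exact (a.quotientEquivOfIsCompl z hza.symm).symm.bijective.comp
    (bijective_projectionOnto_comp_subtype hyb hzb)

theorem isCompl_apply_of_apply_eq_self {τ : Submodule R W → Submodule R W}
    (htrans : ∀ x a, IsCompl x a → IsCompl (τ x) (τ a)) {x a : Submodule R W}
    (hx : τ x = x) (h : IsCompl x a) : IsCompl x (τ a) :=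
  hx ▸ htrans x a h

end Grassmannian

/-- a restricted involution `τ` of the Grassmannian geometry
induces an automorphism of the torsor `U_{a,τ(a)}`, so its fixed point set
`G(τ;a) = U_{a,τ(a)} ∩ Y` is a subtorsor; moreover, as a set,
`G(τ;a) = U_a ∩ Y`. -/
theorem stmt11 {R W : Type*} [Ring R] [AddCommGroup W] [Module R W]
    (τ : Submodule R W → Submodule R W)
    (hord : ∀ x, τ (τ x) = x)
    (htrans : ∀ x a : Submodule R W, IsCompl x a ↔ IsCompl (τ x) (τ a))
    (hinv : ∀ x a y b z : Submodule R W,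
      IsCompl x a → IsCompl x b → IsCompl y a → IsCompl y b →
      IsCompl z a → IsCompl z b →
      τ (Gammap x a y b z) = Gammap (τ x) (τ b) (τ y) (τ a) (τ z))
    (a : Submodule R W) :
    -- τ is an automorphism of the torsor U_{a,τ(a)}
    (∀ x y z : Submodule R W,
      IsCompl x a → IsCompl x (τ a) → IsCompl y a → IsCompl y (τ a) →
      IsCompl z a → IsCompl z (τ a) →
      τ (Gammap x a y (τ a) z) = Gammap (τ x) a (τ y) (τ a) (τ z)) ∧
    -- hence G(τ;a) = U_{a,τ(a)} ∩ Y is a subtorsor: it is closed under the product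
    (∀ x y z : Submodule R W,
      IsCompl x a → IsCompl x (τ a) → IsCompl y a → IsCompl y (τ a) →
      IsCompl z a → IsCompl z (τ a) →
      τ x = x → τ y = y → τ z = z →
      (IsCompl (Gammap x a y (τ a) z) a ∧ IsCompl (Gammap x a y (τ a) z) (τ a) ∧
        τ (Gammap x a y (τ a) z) = Gammap x a y (τ a) z)) ∧
    -- as a set, G(τ;a) = U_a ∩ Y
    ({x : Submodule R W | IsCompl x a ∧ IsCompl x (τ a) ∧ τ x = x}
      = {x : Submodule R W | IsCompl x a ∧ τ x = x}) := by
  have hcompl : ∀ {x}, τ x = x → IsCompl x a → IsCompl x (τ a) :=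
    isCompl_apply_of_apply_eq_self fun x b => (htrans x b).mp
  have hequiv : ∀ x y z : Submodule R W,
      IsCompl x a → IsCompl x (τ a) → IsCompl y a → IsCompl y (τ a) →
      IsCompl z a → IsCompl z (τ a) →
      τ (Gammap x a y (τ a) z) = Gammap (τ x) a (τ y) (τ a) (τ z) := by
    intro x y z hxa hxb hya hyb hza hzb
    simpa only [hord a] using hinv x a y (τ a) z hxa hxb hya hyb hza hzb
  refine ⟨hequiv, ?_, ?_⟩
  · intro x y z hxa hxb hya hyb hza hzb hx hy hz
    have hfix : τ (Gammap x a y (τ a) z) = Gammap x a y (τ a) z := by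
      rw [hequiv x y z hxa hxb hya hyb hza hzb, hx, hy, hz]
    have hΓa := isCompl_gammap hxa hyb hza hzb
    exact ⟨hΓa, hcompl hfix hΓa, hfix⟩
  · ext x
    exact ⟨fun ⟨hxa, _, hx⟩ => ⟨hxa, hx⟩, fun ⟨hxa, hx⟩ => ⟨hxa, hcompl hx hxa, hx⟩⟩
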